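/- arXiv:1207.1111 — 4 statements merged into one kernel-verified Lean document; each statement's English description precedes it below -/
import Mathlib

section
/- Let G be a graph on n vertices and k a positive integer with χ(G) > k. Then the independence number of the Cartesian product G □ K_k is strictly less than n. -/
/-- The independence number of a graph: the supremum of sizes of independent sets. -/
noncomputable def indepNum {V : Type*} (G : SimpleGraph V) : ℕ :=
  sSup {m | ∃ s : Finset V, (∀ x ∈ s, ∀ y ∈ s, x ≠ y → ¬ G.Adj x y) ∧ s.card = m}

/-- If `χ(G) > k` for a graph `G` on `n` vertices (`k > 0`), then
`α(G □ K_k) < n`. -/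
theorem stmt_0 {V : Type*} [Fintype V] (G : SimpleGraph V) (n k : ℕ)
    (hn : Fintype.card V = n) (hk : 0 < k)
    (hχ : (k : ℕ∞) < G.chromaticNumber) :
    indepNum (G.boxProd (⊤ : SimpleGraph (Fin k))) < n := by
  classical
  have hkn : (k : ℕ∞) < (n : ℕ∞) := by
    calc (k : ℕ∞) < G.chromaticNumber := hχ
    _ ≤ (Fintype.card V : ℕ∞) := G.colorable_of_fintype.chromaticNumber_le
    _ = (n : ℕ∞) := by rw [hn]
  have hn0 : 0 < n := by
    by_contra h
    push_neg at h
    interval_cases n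
    exact absurd hkn (by simp)
  have key : ∀ m ∈ {m | ∃ s : Finset (V × Fin k),
      (∀ x ∈ s, ∀ y ∈ s, x ≠ y → ¬ (G.boxProd (⊤ : SimpleGraph (Fin k))).Adj x y) ∧
      s.card = m}, m < n := by
    rintro m ⟨s, hs, rfl⟩
    have hinj : Set.InjOn Prod.fst (s : Set (V × Fin k)) := by
      rintro ⟨v, i⟩ hv ⟨w, j⟩ hw h
      simp only at h
      subst h
      by_contra hne
      have hij : i ≠ j := fun h => hne (by rw [h])
      exact hs _ hv _ hw hne (by simp [SimpleGraph.boxProd_adj, hij])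
    have hle : s.card ≤ n := by
      have := Finset.card_le_card_of_injOn Prod.fst
        (fun x _ => Finset.mem_univ x.1) hinj
      simpa [hn] using this
    rcases lt_or_eq_of_le hle with h | h
    · exact h
    · exfalso
      have himg : s.image Prod.fst = Finset.univ := by
        apply Finset.eq_univ_of_card
        rw [Finset.card_image_of_injOn hinj, h, hn]
      have hc : ∀ v : V, ∃ i : Fin k, (v, i) ∈ s := by
        intro v
        have : v ∈ s.image Prod.fst := by rw [himg]; exact Finset.mem_univ v
        rcases Finset.mem_image.mp this with ⟨⟨v', i⟩, hmem, hv⟩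
        simp only at hv
        subst hv
        exact ⟨i, hmem⟩
      choose c hcmem using hc
      have C : G.Coloring (Fin k) := SimpleGraph.Coloring.mk c (by
        intro v w hvw hcw
        have hvne : v ≠ w := G.ne_of_adj hvw
        refine hs (v, c v) (hcmem v) (w, c w) (hcmem w) (by simp [hvne]) ?_
        simp [SimpleGraph.boxProd_adj, hvw, hcw])
      have : G.chromaticNumber ≤ (k : ℕ∞) := SimpleGraph.Colorable.chromaticNumber_le ⟨C⟩
      exact absurd hχ (not_lt.mpr this)
  have hne : {m | ∃ s : Finset (V × Fin k),
      (∀ x ∈ s, ∀ y ∈ s, x ≠ y → ¬ (G.boxProd (⊤ : SimpleGraph (Fin k))).Adj x y) ∧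
      s.card = m}.Nonempty := ⟨0, ⟨∅, by simp, by simp⟩⟩
  have hsup : indepNum (G.boxProd (⊤ : SimpleGraph (Fin k))) ≤ n - 1 := by
    unfold indepNum
    exact csSup_le hne (fun m hm => Nat.le_pred_of_lt (key m hm))
  exact lt_of_le_of_lt hsup (Nat.pred_lt hn0.ne')
end

section
/- Let G be a graph whose vertex set is partitioned into n cliques each of size k. If G contains an independent set of size n, then G admits a proper k-coloring obtained by coloring each clique representative according to the position of the unique independent-set vertex in that clique. In particular, if χ(G') > k for a graph G' on n vertices, then α(G' □ K_k) < n. -/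
/-- The vertex set of `G □ K_k` is partitioned into the `n` cliques `{v} × [k]`.
(1) Any independent set of size `n` in `G □ K_k` yields a proper `k`-coloring of `G`,
obtained by coloring each vertex `v` by the position of the unique independent-set
vertex in the clique `{v} × [k]`.
(2) In particular, if `χ(G) > k` then `α(G □ K_k) < n`. -/
theorem stmt_3 {V : Type*} [Fintype V] (G : SimpleGraph V) (n k : ℕ)
    (hn : Fintype.card V = n) (hk : 0 < k) :
    (∀ s : Finset (V × Fin k),
      (∀ x ∈ s, ∀ y ∈ s, x ≠ y → ¬ (G.boxProd (⊤ : SimpleGraph (Fin k))).Adj x y) →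
      s.card = n →
      ∃ c : V → Fin k, (∀ v, (v, c v) ∈ s) ∧ ∀ v w, G.Adj v w → c v ≠ c w)
    ∧ ((k : ℕ∞) < G.chromaticNumber →
        indepNum (G.boxProd (⊤ : SimpleGraph (Fin k))) < n) := by
  have main : ∀ s : Finset (V × Fin k),
      (∀ x ∈ s, ∀ y ∈ s, x ≠ y → ¬ (G.boxProd (⊤ : SimpleGraph (Fin k))).Adj x y) →
      s.card = n →
      ∃ c : V → Fin k, (∀ v, (v, c v) ∈ s) ∧ ∀ v w, G.Adj v w → c v ≠ c w := by
    classical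
    intro s hs hcard
    have hinj : Set.InjOn Prod.fst (s : Set (V × Fin k)) := by
      intro x hx y hy hxy
      by_contra hne
      have h1 : x.2 ≠ y.2 := by
        intro h2; exact hne (Prod.ext hxy h2)
      exact hs x hx y hy hne (by simp [SimpleGraph.boxProd_adj, hxy, h1])
    have himg : (s.image Prod.fst).card = n := by
      rw [Finset.card_image_of_injOn hinj, hcard]
    have huniv : s.image Prod.fst = Finset.univ := by
      apply Finset.eq_univ_of_card
      rw [himg, hn]
    have key : ∀ v : V, ∃ b : Fin k, (v, b) ∈ s := by
      intro v
      have : v ∈ s.image Prod.fst := huniv ▸ Finset.mem_univ v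
      obtain ⟨x, hx, hxv⟩ := Finset.mem_image.mp this
      exact ⟨x.2, by rwa [← hxv, Prod.mk.eta]⟩
    refine ⟨fun v => (key v).choose, fun v => (key v).choose_spec, ?_⟩
    intro v w hvw heq
    exact hs _ ((key v).choose_spec) _ ((key w).choose_spec)
      (by simp [G.ne_of_adj hvw]) (by simp [SimpleGraph.boxProd_adj, hvw, heq])
  refine ⟨main, ?_⟩
  intro hlt
  by_contra h
  push_neg at h
  set S : Set ℕ := {m | ∃ s : Finset (V × Fin k),
    (∀ x ∈ s, ∀ y ∈ s, x ≠ y → ¬ (G.boxProd (⊤ : SimpleGraph (Fin k))).Adj x y) ∧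
    s.card = m} with hS
  have hmem : sSup S ∈ S := by
    apply Nat.sSup_mem
    · exact ⟨0, ∅, by simp⟩
    · exact ⟨Fintype.card (V × Fin k), fun m ⟨s, _, hc⟩ => hc ▸ Finset.card_le_univ s⟩
  obtain ⟨s, hsind, hscard⟩ := hmem
  have hle : n ≤ s.card := by rw [hscard]; exact h
  obtain ⟨t, hts, htcard⟩ := Finset.exists_subset_card_eq hle
  have htind : ∀ x ∈ t, ∀ y ∈ t, x ≠ y →
      ¬ (G.boxProd (⊤ : SimpleGraph (Fin k))).Adj x y :=
    fun x hx y hy => hsind x (hts hx) y (hts hy)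
  obtain ⟨c, _, hc⟩ := main t htind htcard
  have hcol : G.Colorable k := by
    simpa using (SimpleGraph.Coloring.mk c fun {v w} h => hc v w h).colorable
  exact absurd hcol.chromaticNumber_le (not_le.mpr hlt)
end

section
/- Let S be a projective Kochen-Specker set and let S_1, ..., S_k be all the subsets of S whose elements sum to the identity. Let G be the orthogonality graph of the multiset S_1 ⊎ ... ⊎ S_k (vertices are occurrences of projectors; two vertices adjacent iff the corresponding projectors P, P' satisfy Tr(PP') = 0). Then α(G) < k. -/
/-
Distinct projectors of a context `T` (a subset of `S` summing to `1`) are orthogonal, because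
`P = P (∑_{R ∈ T} R) P = P + ∑_{R ≠ P} (R P)ᴴ (R P)`. So an independent set of the orthogonality
graph meets each context at most once. One meeting all `k` contexts picks `Q i ∈ 𝒮 i` with
`Tr (Q i * Q j) ≠ 0` for `i ≠ j`; the indicator of `{Q i}` then marks exactly `Q j` in the
context `j`, so it is a marking, and the KS property gives `Tr (Q i * Q j) = 0`. This forces
`i = j` and `Tr (Q i) = 0`, i.e. `Q i = 0`; but then `𝒮 i \ {0}` is another context `j`, and
`Q j` is orthogonal to `Q i = 0`.
-/

open Matrix

/-- An orthogonal projector: a Hermitian matrix `P` with `P² = P`. -/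
def IsProjector {n : ℕ} (P : Matrix (Fin n) (Fin n) ℂ) : Prop :=
  P.IsHermitian ∧ P * P = P

/-- A marking function for a set `S` of projectors: takes values in `{0,1}` on `S`
and sums to `1` over every finite subset of `S` summing to the identity. -/
def IsMarking {n : ℕ} (S : Set (Matrix (Fin n) (Fin n) ℂ))
    (f : Matrix (Fin n) (Fin n) ℂ → ℕ) : Prop :=
  (∀ P ∈ S, f P ≤ 1) ∧
  ∀ T : Finset (Matrix (Fin n) (Fin n) ℂ), ↑T ⊆ S →
    ∑ P ∈ T, P = 1 → ∑ P ∈ T, f P = 1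

/-- A projective Kochen-Specker set: every marking function assigns `1` to two
trace-orthogonal projectors in the set. -/
def IsProjKS {n : ℕ} (S : Set (Matrix (Fin n) (Fin n) ℂ)) : Prop :=
  ∀ f, IsMarking S f →
    ∃ P ∈ S, ∃ P' ∈ S, (P * P').trace = 0 ∧ f P = 1 ∧ f P' = 1

/-- A finite set of vectors forming an orthonormal basis of `ℂⁿ`. -/
def IsONBasis {n : ℕ} (b : Finset (Fin n → ℂ)) : Prop :=
  (∀ u ∈ b, ∀ v ∈ b, star u ⬝ᵥ v = if u = v then 1 else 0) ∧ b.card = n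

/-- A marking function for a set `S'` of unit vectors: takes values in `{0,1}` on `S'`
and sums to `1` over every orthonormal basis contained in `S'`. -/
def IsVecMarking {n : ℕ} (S' : Set (Fin n → ℂ)) (f : (Fin n → ℂ) → ℕ) : Prop :=
  (∀ v ∈ S', f v ≤ 1) ∧
  ∀ b : Finset (Fin n → ℂ), ↑b ⊆ S' → IsONBasis b → ∑ v ∈ b, f v = 1

/-- A weak Kochen-Specker set: every marking function assigns `1` to two
orthogonal vectors in the set. -/
def IsWeakKS {n : ℕ} (S' : Set (Fin n → ℂ)) : Prop :=
  ∀ f, IsVecMarking S' f →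
    ∃ u ∈ S', ∃ v ∈ S', star u ⬝ᵥ v = 0 ∧ f u = 1 ∧ f v = 1

/-- The orthogonality graph of the multiset union `𝒮 0 ⊎ ... ⊎ 𝒮 (k-1)`: vertices are
occurrences of projectors, and two distinct occurrences are adjacent iff the
corresponding projectors are trace-orthogonal. -/
def orthogonalityGraph {n k : ℕ} (𝒮 : Fin k → Finset (Matrix (Fin n) (Fin n) ℂ)) :
    SimpleGraph (Σ i : Fin k, {P : Matrix (Fin n) (Fin n) ℂ // P ∈ 𝒮 i}) where
  Adj x y := x ≠ y ∧ ((x.2 : Matrix (Fin n) (Fin n) ℂ) * (y.2 : Matrix (Fin n) (Fin n) ℂ)).trace = 0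
  symm := ⟨fun x y h => ⟨h.1.symm, by rw [Matrix.trace_mul_comm]; exact h.2⟩⟩
  loopless := ⟨fun x h => h.1 rfl⟩

open Finset

open ComplexOrder in
theorem IsProjector.eq_zero_of_trace_eq_zero {n : ℕ} {P : Matrix (Fin n) (Fin n) ℂ}
    (hP : IsProjector P) (htr : P.trace = 0) : P = 0 := by
  have hPP : Pᴴ * P = P := by rw [hP.1.eq, hP.2]
  rwa [← hPP, trace_conjTranspose_mul_self_eq_zero_iff] at htr

open ComplexOrder in
theorem IsProjector.mul_eq_zero_of_sum_eq_one {n : ℕ} {T : Finset (Matrix (Fin n) (Fin n) ℂ)}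
    (hT : ∀ P ∈ T, IsProjector P) (hsum : ∑ P ∈ T, P = 1) {P Q : Matrix (Fin n) (Fin n) ℂ}
    (hP : P ∈ T) (hQ : Q ∈ T) (hPQ : P ≠ Q) : Q * P = 0 := by
  obtain ⟨hPh, hPP⟩ := hT P hP
  have hsandwich : ∀ R ∈ T, P * R * P = (R * P)ᴴ * (R * P) := fun R hR => by
    obtain ⟨hRh, hRR⟩ := hT R hR
    rw [conjTranspose_mul, hRh.eq, hPh.eq, ← mul_assoc, mul_assoc P R R, hRR]
  have hrest : ∑ R ∈ T.erase P, (P * R * P).trace = 0 := by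
    have h : P * (∑ R ∈ T, R) * P = P := by rw [hsum, mul_one, hPP]
    rw [mul_sum, sum_mul, ← add_sum_erase _ _ hP, hPP, hPP, add_eq_left] at h
    rw [← trace_sum, h, trace_zero]
  have hQP := (sum_eq_zero_iff_of_nonneg fun R hR => hsandwich R (mem_of_mem_erase hR) ▸
    (posSemidef_conjTranspose_mul_self (R * P)).trace_nonneg).mp hrest Q
    (mem_erase.2 ⟨hPQ.symm, hQ⟩)
  rwa [hsandwich Q hQ, trace_conjTranspose_mul_self_eq_zero_iff] at hQP

theorem indepNum_lt_of_forall_isIndepSet {V : Type*} {G : SimpleGraph V} {k : ℕ}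
    (h : ∀ s : Finset V, G.IsIndepSet s → s.card < k) : indepNum G < k := by
  obtain ⟨s, hs, hcard⟩ := Nat.sSup_mem (⟨0, ∅, by simp, rfl⟩ :
    {m | ∃ s : Finset V, (∀ x ∈ s, ∀ y ∈ s, x ≠ y → ¬ G.Adj x y) ∧ s.card = m}.Nonempty)
    ⟨k, by rintro _ ⟨s, hs, rfl⟩; exact (h s hs).le⟩
  rw [indepNum, ← hcard]
  exact h s hs

section Contexts

variable {n k : ℕ} {𝒮 : Fin k → Finset (Matrix (Fin n) (Fin n) ℂ)}

theorem orthogonalityGraph_adj_of_fst_eq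
    (horth : ∀ i, (𝒮 i : Set (Matrix (Fin n) (Fin n) ℂ)).Pairwise fun P Q => (P * Q).trace = 0)
    {x y : Σ i, {P // P ∈ 𝒮 i}} (hne : x ≠ y) (h : x.1 = y.1) :
    (orthogonalityGraph 𝒮).Adj x y := by
  obtain ⟨i, P, hP⟩ := x
  obtain ⟨j, Q, hQ⟩ := y
  obtain rfl : i = j := h
  refine ⟨hne, horth i hP hQ fun hPQ => hne ?_⟩
  subst hPQ
  rfl

theorem exists_transversal_of_isIndepSet
    (horth : ∀ i, (𝒮 i : Set (Matrix (Fin n) (Fin n) ℂ)).Pairwise fun P Q => (P * Q).trace = 0)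
    {s : Finset (Σ i, {P // P ∈ 𝒮 i})} (hs : (orthogonalityGraph 𝒮).IsIndepSet s)
    (hcard : k ≤ s.card) :
    ∃ Q : Fin k → Matrix (Fin n) (Fin n) ℂ,
      (∀ i, Q i ∈ 𝒮 i) ∧ ∀ i j, i ≠ j → (Q i * Q j).trace ≠ 0 := by
  have hinj : ∀ x y, x ∈ s → y ∈ s → x.1 = y.1 → x = y := fun x y hx hy h => by
    by_contra hne
    exact hs hx hy hne (orthogonalityGraph_adj_of_fst_eq horth hne h)
  have hsurj : ∀ i, ∃ P, ∃ hP : P ∈ 𝒮 i, ⟨i, P, hP⟩ ∈ s := fun i => by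
    obtain ⟨⟨j, P, hP⟩, hx, rfl⟩ := surj_on_of_inj_on_of_card_le (t := univ)
      (fun (x : Σ i, {P // P ∈ 𝒮 i}) _ => x.1) (fun _ _ => mem_univ _) hinj
      (by simpa using hcard) i (mem_univ i)
    exact ⟨P, hP, hx⟩
  choose Q hQ hQs using hsurj
  refine ⟨Q, hQ, fun i j hij htr => ?_⟩
  have hne : (⟨i, Q i, hQ i⟩ : Σ i, {P // P ∈ 𝒮 i}) ≠ ⟨j, Q j, hQ j⟩ :=
    fun h => hij (congrArg Sigma.fst h)
  exact hs (hQs i) (hQs j) hne ⟨hne, htr⟩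

theorem IsProjKS.exists_ne_trace_mul_eq_zero {S : Finset (Matrix (Fin n) (Fin n) ℂ)}
    (hproj : ∀ P ∈ S, IsProjector P) (hKS : IsProjKS (S : Set (Matrix (Fin n) (Fin n) ℂ)))
    (hall : ∀ T : Finset (Matrix (Fin n) (Fin n) ℂ),
      (T ⊆ S ∧ ∑ P ∈ T, P = 1) ↔ ∃ i, T = 𝒮 i)
    (horth : ∀ i, (𝒮 i : Set (Matrix (Fin n) (Fin n) ℂ)).Pairwise fun P Q => (P * Q).trace = 0)
    {Q : Fin k → Matrix (Fin n) (Fin n) ℂ} (hQ : ∀ i, Q i ∈ 𝒮 i) :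
    ∃ i j, i ≠ j ∧ (Q i * Q j).trace = 0 := by
  classical
  by_contra! hQorth
  have hctx : ∀ i, 𝒮 i ⊆ S ∧ ∑ P ∈ 𝒮 i, P = 1 := fun i => (hall _).2 ⟨i, rfl⟩
  have hmark : IsMarking (S : Set (Matrix (Fin n) (Fin n) ℂ))
      fun P => if P ∈ Set.range Q then 1 else 0 := by
    refine ⟨fun P _ => ite_le_one le_rfl zero_le_one, fun T hT hsum => ?_⟩
    obtain ⟨j, rfl⟩ := (hall T).1 ⟨coe_subset.1 hT, hsum⟩
    rw [sum_eq_single_of_mem (Q j) (hQ j), if_pos ⟨j, rfl⟩]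
    rintro P hP hPj
    rw [if_neg]
    rintro ⟨i, rfl⟩
    exact hQorth i j (fun h => hPj (congrArg Q h)) (horth j hP (hQ j) hPj)
  obtain ⟨P, -, P', -, htr, hP, hP'⟩ := hKS _ hmark
  obtain ⟨i, rfl⟩ : P ∈ Set.range Q := by by_contra h; simp [h] at hP
  obtain ⟨j, rfl⟩ : P' ∈ Set.range Q := by by_contra h; simp [h] at hP'
  obtain rfl : i = j := by by_contra h; exact hQorth i j h htr
  have hQi : Q i = 0 := (hproj _ ((hctx i).1 (hQ i))).eq_zero_of_trace_eq_zero <| by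
    rwa [(hproj _ ((hctx i).1 (hQ i))).2] at htr
  obtain ⟨j, hj⟩ := (hall ((𝒮 i).erase 0)).1
    ⟨(erase_subset _ _).trans (hctx i).1, by rw [sum_erase (f := fun P => P) _ rfl, (hctx i).2]⟩
  have hji : j ≠ i := by
    rintro rfl
    have h0 := hQ j
    rw [hQi, ← hj] at h0
    exact notMem_erase 0 _ h0
  exact hQorth j i hji (by rw [hQi, mul_zero, trace_zero])

end Contexts

theorem stmt_11_general {n k : ℕ} (S : Finset (Matrix (Fin n) (Fin n) ℂ))
    (hproj : ∀ P ∈ S, IsProjector P)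
    (hKS : IsProjKS (S : Set (Matrix (Fin n) (Fin n) ℂ)))
    (𝒮 : Fin k → Finset (Matrix (Fin n) (Fin n) ℂ))
    (hall : ∀ T : Finset (Matrix (Fin n) (Fin n) ℂ),
      (T ⊆ S ∧ ∑ P ∈ T, P = 1) ↔ ∃ i, T = 𝒮 i) :
    indepNum (orthogonalityGraph 𝒮) < k := by
  have horth : ∀ i, (𝒮 i : Set (Matrix (Fin n) (Fin n) ℂ)).Pairwise
      fun P Q => (P * Q).trace = 0 := fun i P hP Q hQ hPQ => by
    obtain ⟨hsub, hsum⟩ := (hall (𝒮 i)).2 ⟨i, rfl⟩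
    rw [trace_mul_comm, IsProjector.mul_eq_zero_of_sum_eq_one (fun R hR => hproj R (hsub hR))
      hsum hP hQ hPQ, trace_zero]
  refine indepNum_lt_of_forall_isIndepSet fun s hs => lt_of_not_ge fun hcard => ?_
  obtain ⟨Q, hQ, hQorth⟩ := exists_transversal_of_isIndepSet horth hs hcard
  obtain ⟨i, j, hij, htr⟩ := hKS.exists_ne_trace_mul_eq_zero hproj hall horth hQ
  exact hQorth i j hij htr

/-- If `S` is a projective KS set and `𝒮 1, ..., 𝒮 k` are (exactly) all the subsets
of `S` summing to the identity, then the orthogonality graph of their multiset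
union satisfies `α(G) < k`. -/
theorem stmt_11 {n k : ℕ} (S : Finset (Matrix (Fin n) (Fin n) ℂ))
    (hproj : ∀ P ∈ S, IsProjector P)
    (hKS : IsProjKS (S : Set (Matrix (Fin n) (Fin n) ℂ)))
    (𝒮 : Fin k → Finset (Matrix (Fin n) (Fin n) ℂ))
    (hinj : Function.Injective 𝒮)
    (hall : ∀ T : Finset (Matrix (Fin n) (Fin n) ℂ),
      (T ⊆ S ∧ ∑ P ∈ T, P = 1) ↔ ∃ i, T = 𝒮 i) :
    indepNum (orthogonalityGraph 𝒮) < k :=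
  stmt_11_general S hproj hKS 𝒮 hall
end

section
/- Let G be a graph on vertex set V with χ(G) > c. Suppose {P_α^v}_{v∈V, α∈[c]} is a family of n×n orthogonal projectors such that for every v, ∑_{α∈[c]} P_α^v = I, and for every edge (v,w) and color α, Tr(P_α^v P_α^w) = 0. Then the set S = ⋃_{v,α} {P_α^v} is a projective Kochen-Specker set. -/
open Matrix

lemma trace_ct_mul_self {n : ℕ} (A : Matrix (Fin n) (Fin n) ℂ) :
    (Aᴴ * A).trace = ((∑ i, ∑ j, Complex.normSq (A j i) : ℝ) : ℂ) := by
  simp only [Matrix.trace, Matrix.diag, Matrix.mul_apply, Matrix.conjTranspose_apply,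
    Complex.ofReal_sum]
  exact Finset.sum_congr rfl fun i _ => Finset.sum_congr rfl fun j _ =>
    (Complex.normSq_eq_conj_mul_self).symm ▸ rfl

/-- If `χ(G) > c` and `{P_α^v}` is a quantum `c`-coloring of `G` in normal form
(projectors, `∑_α P_α^v = I` for each vertex, and `Tr(P_α^v P_α^w) = 0` along edges),
then the set `S = {P_α^v}` is a projective KS set. -/
theorem stmt_14 {V : Type*} [Fintype V] (G : SimpleGraph V) {n c : ℕ}
    (hχ : (c : ℕ∞) < G.chromaticNumber)
    (P : V → Fin c → Matrix (Fin n) (Fin n) ℂ)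
    (hproj : ∀ v α, IsProjector (P v α))
    (hsum : ∀ v, ∑ α, P v α = 1)
    (hedge : ∀ v w, G.Adj v w → ∀ α, (P v α * P w α).trace = 0) :
    IsProjKS {Q | ∃ v α, Q = P v α} := by
  intro f hf
  -- pairwise orthogonality of projectors at each vertex
  have horth : ∀ (v : V) (α β : Fin c), α ≠ β → P v α * P v β = 0 := by
    intro v α β hab
    set Q := P v α with hQdef
    have hQh : Qᴴ = Q := (hproj v α).1
    have hQi : Q * Q = Q := (hproj v α).2
    set s : Fin c → ℝ := fun γ => ∑ i, ∑ j, Complex.normSq ((Q * P v γ) j i) with hsdef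
    have key : ∀ γ, ((s γ : ℝ) : ℂ) = (P v γ * Q).trace := by
      intro γ
      have h1 : (Q * P v γ)ᴴ = P v γ * Q := by
        rw [Matrix.conjTranspose_mul, hQh, (hproj v γ).1.eq]
      have h2 : ((Q * P v γ)ᴴ * (Q * P v γ)).trace = (P v γ * Q).trace := by
        rw [h1]
        have e1 : P v γ * Q * (Q * P v γ) = (P v γ * Q) * P v γ := by
          rw [Matrix.mul_assoc (P v γ) Q, ← Matrix.mul_assoc Q Q, hQi, ← Matrix.mul_assoc]
        rw [e1, Matrix.trace_mul_comm, ← Matrix.mul_assoc, (hproj v γ).2]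
      rw [← h2, trace_ct_mul_self]
    have hs_nonneg : ∀ γ, 0 ≤ s γ := fun γ =>
      Finset.sum_nonneg fun i _ => Finset.sum_nonneg fun j _ => Complex.normSq_nonneg _
    have h1 : ∑ γ, ((s γ : ℝ) : ℂ) = Q.trace := by
      simp only [key]
      rw [← Matrix.trace_sum, ← Finset.sum_mul, hsum v, one_mul]
    have h2 : ((s α : ℝ) : ℂ) = Q.trace := by
      rw [key α, ← hQdef, hQi]
    have h3 : ∑ γ ∈ Finset.univ.erase α, ((s γ : ℝ) : ℂ) = 0 := by
      rw [Finset.sum_erase_eq_sub (Finset.mem_univ α), h1, h2, sub_self]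
    have h4 : ∑ γ ∈ Finset.univ.erase α, s γ = 0 := by
      have := h3
      rw [← Complex.ofReal_sum] at this
      exact_mod_cast this
    have h5 : s β = 0 :=
      (Finset.sum_eq_zero_iff_of_nonneg (fun γ _ => hs_nonneg γ)).mp h4 β
        (Finset.mem_erase.mpr ⟨fun h => hab h.symm, Finset.mem_univ β⟩)
    ext i j
    have h6 := (Finset.sum_eq_zero_iff_of_nonneg
      (fun i _ => Finset.sum_nonneg fun j _ => Complex.normSq_nonneg _)).mp h5 j
      (Finset.mem_univ j)
    have h7 := (Finset.sum_eq_zero_iff_of_nonneg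
      (fun k _ => Complex.normSq_nonneg _)).mp h6 i (Finset.mem_univ i)
    simpa using Complex.normSq_eq_zero.mp h7
  have hzero : ∀ (v : V) (α β : Fin c), α ≠ β → P v α = P v β → P v α = 0 := by
    intro v α β hab heq
    calc P v α = P v α * P v α := ((hproj v α).2).symm
    _ = P v α * P v β := by rw [← heq]
    _ = 0 := horth v α β hab
  by_contra hcon
  push_neg at hcon
  have hcol : ∀ v : V, ∃ α, f (P v α) = 1 := by
    intro v
    set T : Finset (Matrix (Fin n) (Fin n) ℂ) := Finset.univ.image (P v) with hTdef
    have hTS : ↑T ⊆ {Q | ∃ v α, Q = P v α} := by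
      intro Q hQ
      obtain ⟨α, -, rfl⟩ := Finset.mem_image.mp hQ
      exact ⟨v, α, rfl⟩
    have hTsum : ∑ Q ∈ T, Q = 1 := by
      set A : Finset (Fin c) := Finset.univ.filter (fun α => P v α ≠ 0) with hAdef
      have e1 : T.filter (fun Q => Q ≠ 0) = A.image (P v) := by
        ext Q
        constructor
        · intro hQ
          obtain ⟨hQT, hne⟩ := Finset.mem_filter.mp hQ
          obtain ⟨α, -, rfl⟩ := Finset.mem_image.mp hQT
          exact Finset.mem_image.mpr ⟨α, Finset.mem_filter.mpr ⟨Finset.mem_univ α, hne⟩, rfl⟩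
        · intro hQ
          obtain ⟨α, hα, rfl⟩ := Finset.mem_image.mp hQ
          exact Finset.mem_filter.mpr ⟨Finset.mem_image.mpr ⟨α, Finset.mem_univ α, rfl⟩,
            (Finset.mem_filter.mp hα).2⟩
      have e2 : ∑ Q ∈ A.image (P v), Q = ∑ α ∈ A, P v α := by
        refine Finset.sum_image ?_
        intro α ha β hb heq
        by_contra hab
        exact (Finset.mem_filter.mp ha).2 (hzero v α β hab heq)
      have e3 : ∑ α ∈ A, P v α = ∑ α, P v α := by
        refine Finset.sum_filter_ne_zero Finset.univ
      calc ∑ Q ∈ T, Q = ∑ Q ∈ T.filter (fun Q => Q ≠ 0), Q :=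
            (Finset.sum_filter_ne_zero T).symm
      _ = ∑ α ∈ A, P v α := by rw [e1, e2]
      _ = 1 := by rw [e3, hsum v]
    have hone := hf.2 T hTS hTsum
    obtain ⟨Q, hQT, hQne⟩ := Finset.exists_ne_zero_of_sum_ne_zero
      (by rw [hone]; exact one_ne_zero)
    obtain ⟨α, -, rfl⟩ := Finset.mem_image.mp hQT
    exact ⟨α, le_antisymm (hf.1 _ (hTS hQT)) (Nat.one_le_iff_ne_zero.mpr hQne)⟩
  choose col hcolspec using hcol
  have hcolor : G.Colorable c := by
    refine ⟨SimpleGraph.Coloring.mk col ?_⟩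
    intro v w hvw hcoleq
    refine hcon (P v (col v)) ⟨v, col v, rfl⟩ (P w (col w)) ⟨w, col w, rfl⟩ ?_
      (hcolspec v) (hcolspec w)
    rw [hcoleq]
    exact hedge v w hvw (col w)
  exact absurd hcolor.chromaticNumber_le (not_le.mpr hχ)
end
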